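/- Let f : I → [0,1] be nonnegative numbers with Σ_{x∈I} f_x ≤ 1, let g_x = Σ_{y≠x} f_y, assume f_x ≤ v(p_{xy}) ≤ g_y for all distinct x, y ∈ I, and let the initial valuation have v(s_x) = f_x and v(¬s_x) = g_x for all x. Then x is a supremacy winner, i.e., v*(s_x) ≥ v*(¬s_x) for the upper revised valuation v*, if and only if x maximizes the plurality fraction, i.e., f_x ≥ f_y for all y ∈ I. -/

import Mathlib

/-!
Along the iteration from `v`, the value of `¬s_a` stays `g_a`, while `p_{ab}` and `s_a` stay
below `g_b` for `b ≠ a`: each revision rule only takes maxima of quantities already bounded in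
this way. Hence at the limit `v*(¬s_x) = g_x` and `v*(s_x) ≤ min_{y ≠ x} g_y`, which is at least
`g_x` only when `f_x` is maximal, as `g_y = Σ f - f_y`. Conversely, if `f_x` is maximal then the
rule `s_x ⇐ ∧_{y ≠ x} ¬s_y` forces `v*(s_x) ≥ min_{y ≠ x} g_y ≥ g_x` at the fixed point.
-/

/-- A valuation for the supremacy doctrine: degrees of belief for the literals
`s_x` ("x is supreme"), `¬s_x`, and `p_{xy}` ("x is preferable to y", for
distinct `x, y`), under the identification `¬p_{xy} = p_{yx}`. -/
structure SVal (I : Type*) where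
  s : I → ℝ
  ns : I → ℝ
  p : I → I → ℝ

/-- Max over a (possibly empty) index set of reals: the empty max is `0`
(note `Real.sSup_empty = 0`). -/
noncomputable def sup0 (S : Set ℝ) : ℝ := sSup S

open Classical in
/-- Min over a (possibly empty) index set of reals: the empty min is `1`. -/
noncomputable def inf1 (S : Set ℝ) : ℝ := if S.Nonempty then sInf S else 1

/-- The one-step revision operator associated with the supremacy doctrine. -/
noncomputable def Tsup {I : Type*} (v : SVal I) : SVal I where
  s := fun x => max (v.s x)
    (max (inf1 {b : ℝ | ∃ y, y ≠ x ∧ b = v.ns y})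
         (inf1 {b : ℝ | ∃ y, y ≠ x ∧ b = v.p x y}))
  ns := fun x => max (v.ns x) (sup0 {b : ℝ | ∃ y, y ≠ x ∧ b = v.p y x})
  p := fun x y => max (v.p x y)
    (max (v.s x)
         (min (v.ns y) (inf1 {b : ℝ | ∃ z, z ≠ x ∧ z ≠ y ∧ b = v.p y z})))

theorem sup0_le {S : Set ℝ} {c : ℝ} (hc : 0 ≤ c) (h : ∀ b ∈ S, b ≤ c) : sup0 S ≤ c :=
  Real.sSup_le h hc

theorem inf1_le {S : Set ℝ} {b : ℝ} (hS : BddBelow S) (hb : b ∈ S) : inf1 S ≤ b := by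
  rw [inf1, if_pos ⟨b, hb⟩]
  exact csInf_le hS hb

theorem le_inf1 {S : Set ℝ} {c : ℝ} (hc : c ≤ 1) (h : ∀ b ∈ S, c ≤ b) : c ≤ inf1 S := by
  unfold inf1
  split_ifs with hS
  · exact le_csInf hS h
  · exact hc

theorem bddBelow_setOf_exists_eq {I : Type*} [Finite I] (h : I → ℝ) (P : I → Prop) :
    BddBelow {b : ℝ | ∃ y, P y ∧ b = h y} :=
  (Set.finite_range h).bddBelow.mono fun _ ⟨y, _, hb⟩ => Set.mem_range.mpr ⟨y, hb.symm⟩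

theorem Function.IsFixedPt.of_iterate_eventually_eq {α : Type*} {T : α → α} {v w : α} {N : ℕ}
    (h : ∀ n ≥ N, T^[n] v = w) : Function.IsFixedPt T w := by
  have h' := h (N + 1) N.le_succ
  rwa [Function.iterate_succ_apply', h N le_rfl] at h'

theorem inf1_ns_le_tsup_s {I : Type*} (w : SVal I) (x : I) :
    inf1 {b : ℝ | ∃ y, y ≠ x ∧ b = w.ns y} ≤ (Tsup w).s x :=
  le_max_of_le_right (le_max_left _ _)

structure SVal.IsBoundedBy {I : Type*} (g : I → ℝ) (w : SVal I) : Prop where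
  ns_eq : ∀ a, w.ns a = g a
  p_le : ∀ a b, a ≠ b → w.p a b ≤ g b
  s_le : ∀ a b, a ≠ b → w.s a ≤ g b

namespace SVal.IsBoundedBy

variable {I : Type*} [Finite I] {g : I → ℝ}

theorem tsup (hg : ∀ a, 0 ≤ g a) {w : SVal I} (hw : w.IsBoundedBy g) :
    (Tsup w).IsBoundedBy g where
  ns_eq a := by
    change max (w.ns a) _ = g a
    rw [hw.ns_eq a]
    refine max_eq_left (sup0_le (hg a) ?_)
    rintro _ ⟨y, hy, rfl⟩
    exact hw.p_le y a hy
  p_le a b hab :=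
    max_le (hw.p_le a b hab) <| max_le (hw.s_le a b hab) <|
      (min_le_left _ _).trans (hw.ns_eq b).le
  s_le a b hab :=
    max_le (hw.s_le a b hab) <| max_le
      ((inf1_le (bddBelow_setOf_exists_eq _ _) ⟨b, hab.symm, rfl⟩).trans (hw.ns_eq b).le)
      ((inf1_le (bddBelow_setOf_exists_eq _ _) ⟨b, hab.symm, rfl⟩).trans (hw.p_le a b hab))

theorem iterate (hg : ∀ a, 0 ≤ g a) {v : SVal I} (hv : v.IsBoundedBy g) (n : ℕ) :
    (Tsup^[n] v).IsBoundedBy g := by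
  induction n with
  | zero => exact hv
  | succ n ih => rw [Function.iterate_succ_apply']; exact ih.tsup hg

end SVal.IsBoundedBy

theorem stmt9_general {I : Type*} [Fintype I] [DecidableEq I]
    (v : SVal I)
    (f g : I → ℝ)
    (hf0 : ∀ x, 0 ≤ f x) (hfsum : ∑ x, f x ≤ 1)
    (hg : ∀ x, g x = ∑ y ∈ Finset.univ.erase x, f y)
    (hsandwich : ∀ x y : I, x ≠ y → f x ≤ v.p x y ∧ v.p x y ≤ g y)
    (hs : ∀ x, v.s x = f x) (hns : ∀ x, v.ns x = g x)
    (vstar : SVal I) (hstar : ∃ N : ℕ, ∀ n ≥ N, Tsup^[n] v = vstar)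
    (x : I) :
    vstar.ns x ≤ vstar.s x ↔ ∀ y : I, f y ≤ f x := by
  have hg_eq : ∀ a, g a = ∑ y, f y - f a := fun a => by
    rw [hg a, Finset.sum_erase_eq_sub (Finset.mem_univ a)]
  have hg0 : ∀ a, 0 ≤ g a := fun a => (hg a).symm ▸ Finset.sum_nonneg fun y _ => hf0 y
  obtain ⟨N, hN⟩ := hstar
  have hfix : Tsup vstar = vstar := Function.IsFixedPt.of_iterate_eventually_eq hN
  have hv : v.IsBoundedBy g :=
    ⟨hns, fun a b hab => (hsandwich a b hab).2,
      fun a b hab => (hs a).trans_le ((hsandwich a b hab).1.trans (hsandwich a b hab).2)⟩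
  have hbound : vstar.IsBoundedBy g := hN N le_rfl ▸ hv.iterate hg0 N
  rw [hbound.ns_eq x]
  constructor
  · intro hwin y
    rcases eq_or_ne y x with rfl | hyx
    · exact le_rfl
    · have := hwin.trans (hbound.s_le x y hyx.symm)
      linarith [hg_eq x, hg_eq y]
  · intro hmax
    calc g x ≤ inf1 {b : ℝ | ∃ y, y ≠ x ∧ b = vstar.ns y} := by
          refine le_inf1 (by linarith [hg_eq x, hf0 x]) ?_
          rintro _ ⟨y, -, rfl⟩
          linarith [hbound.ns_eq y, hg_eq x, hg_eq y, hmax y]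
      _ ≤ (Tsup vstar).s x := inf1_ns_le_tsup_s vstar x
      _ = vstar.s x := by rw [hfix]

/-- Plurality rule: with initial beliefs `v(s_x) = f_x` and `v(¬s_x) = g_x`
as in preferential voting, an option `x` is a supremacy winner iff it
maximizes the plurality fraction `f_x`. -/
theorem stmt9 {I : Type*} [Fintype I] [DecidableEq I]
    (hcard : 2 ≤ Fintype.card I)
    (v : SVal I)
    (f g : I → ℝ)
    (hf0 : ∀ x, 0 ≤ f x) (hf1 : ∀ x, f x ≤ 1) (hfsum : ∑ x, f x ≤ 1)
    (hg : ∀ x, g x = ∑ y ∈ Finset.univ.erase x, f y)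
    (hsandwich : ∀ x y : I, x ≠ y → f x ≤ v.p x y ∧ v.p x y ≤ g y)
    (hs : ∀ x, v.s x = f x) (hns : ∀ x, v.ns x = g x)
    (vstar : SVal I) (hstar : ∃ N : ℕ, ∀ n ≥ N, Tsup^[n] v = vstar)
    (x : I) :
    vstar.ns x ≤ vstar.s x ↔ ∀ y : I, f y ≤ f x :=
  stmt9_general v f g hf0 hfsum hg hsandwich hs hns vstar hstar x
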